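/- Let n ≥ 3 be odd and let q ∈ k be a primitive n-th root of unity. Let A be an n-dimensional k-algebra with no nonzero nilpotent elements, equipped with a u_q(sl₂)-module-algebra structure (κ, e, f) such that f ≠ 0 or e ≠ 0. Then there exist u ∈ A and nonzero scalars β, γ, δ ∈ k such that: A is generated as a k-algebra by u, u^n = β·1_A, κ(u) = q²·u, f(u) = γ·1_A, e(u) = δ·u², and γδ = −q. Moreover, u is unique up to a scalar multiple. -/

import Mathlib

/-!
A reduced finite-dimensional algebra over an algebraically closed field is commutative (its
idempotents are central, and each `a` is a combination of idempotents of `k[a] ≅ k^m`), hence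
`A ≅ k^X` with `|X| = n`, spanned by its minimal idempotents, which `κ` permutes.

If `κ^d ε = ε` with `0 < d < n`, then `e ε = κ ε · e ε + e ε · ε` lies in `k κ ε + k ε`, on which
`κ^d` acts trivially, while `κ^d (e ε) = q^{2d} e ε`; so `e ε = 0`, and likewise `f ε = 0`. As
`e ≠ 0` or `f ≠ 0`, some minimal idempotent `ε` has a `κ`-orbit of length `n`, which therefore
consists of all `n` minimal idempotents. The Fourier sum `u = ∑ q^{-2i} κ^i ε` is then a unit with
`κ u = q² u`, the `κ`-fixed elements are the scalars, and every `κ`-eigenvector is a multiple of a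
power of `u`. This gives `u^n`, `f u`, `e u` and the uniqueness of `u`; the powers `u^j`, `j < n`,
have distinct eigenvalues and so span `A`. Evaluating `[e, f] = (κ - κ⁻¹)/(q - q⁻¹)` at `u`
yields `γδ = -q`.
-/

open Finset Function Module

/-- In `X → k` these are exactly the `Pi.single x 1`, i.e. the points of `X`. -/
structure IsMinimalIdempotent (k : Type*) {A : Type*} [Field k] [Semiring A] [Algebra k A]
    (ε : A) : Prop where
  isIdempotentElem : IsIdempotentElem ε
  ne_zero : ε ≠ 0
  exists_mul_eq_smul : ∀ a : A, ∃ t : k, ε * a = t • ε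

section

variable {k A B : Type*} [Field k] [Semiring A] [Algebra k A] [Semiring B] [Algebra k B]

theorem IsMinimalIdempotent.map {ε : A} (hε : IsMinimalIdempotent k ε) (φ : A ≃ₐ[k] B) :
    IsMinimalIdempotent k (φ ε) where
  isIdempotentElem := hε.isIdempotentElem.map φ
  ne_zero := (map_ne_zero_iff φ φ.injective).mpr hε.ne_zero
  exists_mul_eq_smul b := by
    obtain ⟨t, ht⟩ := hε.exists_mul_eq_smul (φ.symm b)
    exact ⟨t, by rw [← φ.apply_symm_apply b, ← map_mul, ht, map_smul]⟩

theorem isMinimalIdempotent_single {X : Type*} [DecidableEq X] (x : X) :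
    IsMinimalIdempotent k (Pi.single x 1 : X → k) where
  isIdempotentElem := by simp [IsIdempotentElem, ← Pi.single_mul]
  ne_zero := by simp
  exists_mul_eq_smul g := ⟨g x, by
    ext y; by_cases h : y = x <;> simp [h]⟩

end

theorem IsIdempotentElem.commute_of_isReduced {R : Type*} [Ring R] [IsReduced R] {e : R}
    (he : IsIdempotentElem e) (x : R) : Commute e x := by
  have hl : e * x * (1 - e) = 0 := IsReduced.eq_zero _ ⟨2, by
    rw [sq, show e * x * (1 - e) * (e * x * (1 - e)) = e * x * ((1 - e) * e) * x * (1 - e) by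
      noncomm_ring, sub_mul, one_mul, he.eq, sub_self, mul_zero, zero_mul, zero_mul]⟩
  have hr : (1 - e) * x * e = 0 := IsReduced.eq_zero _ ⟨2, by
    rw [sq, show (1 - e) * x * e * ((1 - e) * x * e) = (1 - e) * x * (e * (1 - e)) * x * e by
      noncomm_ring, mul_sub, mul_one, he.eq, sub_self, mul_zero, zero_mul, zero_mul]⟩
  rw [mul_sub, mul_one, sub_eq_zero] at hl
  rw [sub_mul, sub_mul, one_mul, sub_eq_zero] at hr
  exact hl.trans hr.symm

theorem span_setOf_isMinimalIdempotent_eq_top {k A : Type*} [Field k] [IsAlgClosed k]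
    [CommRing A] [Algebra k A] [IsReduced A] [FiniteDimensional k A] :
    Submodule.span k {ε : A | IsMinimalIdempotent k ε} = ⊤ := by
  classical
  have : IsArtinianRing A := isArtinian_of_tower k inferInstance
  let _ (I : MaximalSpectrum A) : Field (A ⧸ I.asIdeal) := Ideal.Quotient.field I.asIdeal
  have : Fintype (MaximalSpectrum A) := Fintype.ofFinite _
  let Φ : A ≃ₐ[k] (MaximalSpectrum A → k) :=
    ((IsArtinianRing.equivPi A).restrictScalars k).trans <|
      AlgEquiv.piCongrRight fun I ↦ (AlgEquiv.ofBijective (Algebra.ofId k _)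
        IsAlgClosed.algebraMap_bijective_of_isIntegral).symm
  let b := (Pi.basisFun k (MaximalSpectrum A)).map Φ.symm.toLinearEquiv
  refine top_unique (b.span_eq.symm.trans_le (Submodule.span_mono ?_))
  rintro _ ⟨I, rfl⟩
  exact (isMinimalIdempotent_single I).map Φ.symm

open scoped IsMulCommutative in
theorem mul_comm_of_isReduced {k A : Type*} [Field k] [IsAlgClosed k] [Ring A] [Algebra k A]
    [IsReduced A] [FiniteDimensional k A] (a b : A) : a * b = b * a := by
  let B := Algebra.adjoin k {a}
  have : IsReduced B := isReduced_of_injective B.val Subtype.val_injective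
  have ha : (⟨a, Algebra.self_mem_adjoin_singleton k a⟩ : B) ∈
      Submodule.span k {ε : B | IsMinimalIdempotent k ε} := by
    rw [span_setOf_isMinimalIdempotent_eq_top]; trivial
  refine Submodule.span_induction (p := fun (x : B) _ ↦ Commute (x : A) b) ?_ ?_ ?_ ?_ ha
  · intro ε hε
    exact (hε.isIdempotentElem.map B.val).commute_of_isReduced b
  · exact Commute.zero_left b
  · intro x y _ _ hx hy
    exact hx.add_left hy
  · intro t x _ hx
    exact hx.smul_left t

section Commutative

variable {k A : Type*} [Field k] [CommRing A] [Algebra k A]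

theorem IsMinimalIdempotent.mul_eq_self_of_mul_ne_zero {ε ε' : A}
    (hε : IsMinimalIdempotent k ε) (hε' : IsIdempotentElem ε') (h : ε * ε' ≠ 0) :
    ε * ε' = ε := by
  obtain ⟨t, ht⟩ := hε.exists_mul_eq_smul ε'
  have ht0 : t ≠ 0 := by rintro rfl; exact h (by rw [ht, zero_smul])
  have htt : (t * t) • ε = t • ε :=
    calc (t * t) • ε = (ε * ε') * ε' := by rw [ht, smul_mul_assoc, ht, mul_smul]
      _ = t • ε := by rw [mul_assoc, hε'.eq, ht]
  have ht1 : t = 1 :=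
    mul_left_cancel₀ ht0 ((smul_left_injective k hε.ne_zero htt).trans (mul_one t).symm)
  rw [ht, ht1, one_smul]

theorem IsMinimalIdempotent.mul_eq_zero_of_ne {ε ε' : A} (hε : IsMinimalIdempotent k ε)
    (hε' : IsMinimalIdempotent k ε') (hne : ε ≠ ε') : ε * ε' = 0 := by
  by_contra h
  refine hne ?_
  calc ε = ε * ε' := (hε.mul_eq_self_of_mul_ne_zero hε'.isIdempotentElem h).symm
    _ = ε' * ε := mul_comm ε ε'
    _ = ε' := hε'.mul_eq_self_of_mul_ne_zero hε.isIdempotentElem (by rwa [mul_comm])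

theorem sum_eq_one_of_card_eq_finrank [FiniteDimensional k A] {ι : Type*} [Fintype ι]
    {v : ι → A} (hv : ∀ i, IsMinimalIdempotent k (v i)) (hinj : Injective v)
    (hcard : Fintype.card ι = finrank k A) : ∑ i, v i = 1 := by
  classical
  have hproj : ∀ (g : ι → k) i, v i * ∑ j, g j • v j = g i • v i := fun g i ↦ by
    rw [Finset.mul_sum, Finset.sum_eq_single i]
    · rw [mul_smul_comm, (hv i).isIdempotentElem.eq]
    · intro j _ hji
      rw [mul_smul_comm, (hv i).mul_eq_zero_of_ne (hv j) (hinj.ne hji.symm), smul_zero]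
    · exact fun h ↦ absurd (Finset.mem_univ i) h
  have hli : LinearIndependent k v := by
    refine Fintype.linearIndependent_iff.mpr fun g hg i ↦ ?_
    have := hproj g i
    rw [hg, mul_zero, eq_comm, smul_eq_zero] at this
    exact this.resolve_right (hv i).ne_zero
  obtain ⟨c, hc⟩ := (Submodule.mem_span_range_iff_exists_fun k).mp
    ((hli.span_eq_top_of_card_eq_finrank' hcard).symm ▸ Submodule.mem_top : (1 : A) ∈ _)
  calc ∑ i, v i = ∑ i, v i * ∑ j, c j • v j := by simp_rw [hc, mul_one]
    _ = ∑ i, c i • v i := by simp_rw [hproj]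
    _ = 1 := hc

theorem IsMinimalIdempotent.mul_eq_zero_of_apply_eq_smul {F : Type*} [FunLike F A A]
    [AlgHomClass F k A A] {g : F} {p v : A} (hp : IsMinimalIdempotent k p) (hgp : g p = p)
    {c : k} (hc : c ≠ 1) (hgv : g v = c • v) : p * v = 0 := by
  obtain ⟨t, ht⟩ := hp.exists_mul_eq_smul v
  have hfix : c • (p * v) = p * v := by
    rw [← mul_smul_comm, ← hgv, ← hgp, ← map_mul, ht, map_smul, hgp, ht]
  have : (c - 1) • (p * v) = 0 := by rw [sub_smul, one_smul, hfix, sub_self]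
  exact (smul_eq_zero.mp this).resolve_left (sub_ne_zero.mpr hc)

theorem AlgEquiv.pow_apply_apply_eq_smul {κ : A ≃ₐ[k] A} {D : A →ₗ[k] A} {c : k}
    (h : ∀ a, κ (D a) = c • D (κ a)) (d : ℕ) (a : A) :
    (κ ^ d) (D a) = c ^ d • D ((κ ^ d) a) := by
  induction d generalizing a with
  | zero => simp
  | succ d ih => rw [pow_succ, AlgEquiv.mul_apply, h, map_smul, ih, smul_smul, ← pow_succ',
      AlgEquiv.mul_apply]

theorem apply_eq_zero_of_pow_apply_eq_self {κ α β : A ≃ₐ[k] A} {D : A →ₗ[k] A} {c : k}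
    (hD : ∀ a b, D (a * b) = α a * D b + D a * β b) (hκD : ∀ a, κ (D a) = c • D (κ a))
    (hα : Commute α κ) (hβ : Commute β κ) {ε : A} (hε : IsMinimalIdempotent k ε) {d : ℕ}
    (hfix : (κ ^ d) ε = ε) (hc : c ^ d ≠ 1) : D ε = 0 := by
  have hfix' : ∀ γ : A ≃ₐ[k] A, Commute γ κ → (κ ^ d) (γ ε) = γ ε := fun γ hγ ↦ by
    rw [← AlgEquiv.mul_apply, ← (hγ.pow_right d).eq, AlgEquiv.mul_apply, hfix]
  have hD' : (κ ^ d) (D ε) = c ^ d • D ε := by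
    rw [AlgEquiv.pow_apply_apply_eq_smul hκD, hfix]
  have hε2 := hD ε ε
  rw [hε.isIdempotentElem.eq, mul_comm (D ε),
    (hε.map α).mul_eq_zero_of_apply_eq_smul (hfix' α hα) hc hD',
    (hε.map β).mul_eq_zero_of_apply_eq_smul (hfix' β hβ) hc hD', add_zero] at hε2
  exact hε2

theorem exists_isMinimalIdempotent_minimalPeriod_eq [IsAlgClosed k] [IsReduced A]
    [FiniteDimensional k A] {n : ℕ} (hn : n ≠ 0) {q : k} (hq : IsPrimitiveRoot (q ^ 2) n)
    {κ : A ≃ₐ[k] A} (hκn : κ ^ n = 1) {e f : A →ₗ[k] A}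
    (heab : ∀ a c, e (a * c) = κ a * e c + e a * c)
    (hfab : ∀ a c, f (a * c) = a * f c + f a * κ⁻¹ c)
    (hκe : ∀ a, κ (e a) = q ^ 2 • e (κ a)) (hκf : ∀ a, κ (f a) = q⁻¹ ^ 2 • f (κ a))
    (hne : f ≠ 0 ∨ e ≠ 0) : ∃ ε, IsMinimalIdempotent k ε ∧ minimalPeriod κ ε = n := by
  have hkill : ∀ ε, IsMinimalIdempotent k ε → minimalPeriod κ ε ≠ n → e ε = 0 ∧ f ε = 0 := by
    intro ε hε hper
    have hperiodic : IsPeriodicPt κ n ε := by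
      rw [IsPeriodicPt, IsFixedPt, ← AlgEquiv.coe_pow, hκn, AlgEquiv.one_apply]
    have hfix : (κ ^ minimalPeriod κ ε) ε = ε := by
      rw [AlgEquiv.coe_pow]; exact iterate_minimalPeriod
    have hc : (q ^ 2) ^ minimalPeriod κ ε ≠ 1 :=
      hq.pow_ne_one_of_pos_of_lt (hperiodic.minimalPeriod_pos (Nat.pos_of_ne_zero hn)).ne'
        ((hperiodic.minimalPeriod_le (Nat.pos_of_ne_zero hn)).lt_of_ne hper)
    refine ⟨apply_eq_zero_of_pow_apply_eq_self (β := 1) heab hκe (Commute.refl κ)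
      (Commute.one_left κ) hε hfix hc, apply_eq_zero_of_pow_apply_eq_self (α := 1) hfab hκf
      (Commute.one_left κ) (Commute.refl κ).inv_left hε hfix ?_⟩
    rwa [inv_pow, inv_pow, ne_eq, inv_eq_one]
  by_contra! h
  have hspan := span_setOf_isMinimalIdempotent_eq_top (k := k) (A := A)
  rcases hne with hf | he
  · exact hf (LinearMap.ext_on hspan fun ε hε ↦ (hkill ε hε (h ε hε)).2)
  · exact he (LinearMap.ext_on hspan fun ε hε ↦ (hkill ε hε (h ε hε)).1)

theorem sum_pow_apply_eq_one [FiniteDimensional k A] {κ : A ≃ₐ[k] A} {ε : A}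
    (hε : IsMinimalIdempotent k ε) {n : ℕ} (hper : minimalPeriod κ ε = n)
    (hdim : finrank k A = n) : ∑ i ∈ range n, (κ ^ i) ε = 1 := by
  rw [← Fin.sum_univ_eq_sum_range (fun i ↦ (κ ^ i) ε)]
  refine sum_eq_one_of_card_eq_finrank (fun i ↦ hε.map _) (fun i j hij ↦ Fin.ext ?_)
    (by rw [Fintype.card_fin, hdim])
  simp only [AlgEquiv.coe_pow] at hij
  exact iterate_injOn_Iio_minimalPeriod (by simp [hper]) (by simp [hper]) hij

theorem exists_eq_smul_one_of_apply_eq_self {κ : A ≃ₐ[k] A} {ε : A}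
    (hε : IsMinimalIdempotent k ε) {n : ℕ} (hsum : ∑ i ∈ range n, (κ ^ i) ε = 1) {a : A}
    (ha : κ a = a) : ∃ t : k, a = t • 1 := by
  obtain ⟨t, ht⟩ := hε.exists_mul_eq_smul a
  refine ⟨t, ?_⟩
  have hpow : ∀ i, (κ ^ i) a = a := fun i ↦ by rw [AlgEquiv.coe_pow, iterate_fixed ha]
  calc a = ∑ i ∈ range n, (κ ^ i) (ε * a) := by
        simp_rw [map_mul, hpow, ← Finset.sum_mul, hsum, one_mul]
    _ = t • 1 := by simp_rw [ht, map_smul, ← Finset.smul_sum, hsum]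

def orbitSum (κ : A ≃ₐ[k] A) (ζ : k) (n : ℕ) (ε : A) : A :=
  ∑ i ∈ range n, ζ⁻¹ ^ i • (κ ^ i) ε

theorem apply_orbitSum {κ : A ≃ₐ[k] A} {ζ : k} {n : ℕ} (hζ : ζ ^ n = 1) {ε : A}
    (hε : (κ ^ n) ε = ε) : κ (orbitSum κ ζ n ε) = ζ • orbitSum κ ζ n ε := by
  rcases Nat.eq_zero_or_pos n with rfl | hn
  · simp [orbitSum]
  have hζ0 : ζ ≠ 0 := by rintro rfl; simp [hn.ne'] at hζ
  set F : ℕ → A := fun i ↦ ζ⁻¹ ^ i • (κ ^ i) ε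
  have hshift : ∑ i ∈ range n, F (i + 1) = ∑ i ∈ range n, F i := by
    have h := (sum_range_succ' F n).symm.trans (sum_range_succ F n)
    have hF : F n = F 0 := by
      simp only [F, inv_pow, hζ, hε, inv_one, pow_zero, one_smul, AlgEquiv.one_apply]
    rwa [hF, add_left_inj] at h
  calc κ (orbitSum κ ζ n ε) = ∑ i ∈ range n, ζ • F (i + 1) := by
        simp only [orbitSum, map_sum, map_smul, F, smul_smul, pow_succ', AlgEquiv.mul_apply]
        simp [mul_inv_cancel_left₀ hζ0]
    _ = ζ • orbitSum κ ζ n ε := by rw [← smul_sum, hshift]; rfl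

theorem mul_orbitSum {κ : A ≃ₐ[k] A} {ζ : k} {n : ℕ} (hn : n ≠ 0) {ε : A}
    (hε : IsMinimalIdempotent k ε) (hper : minimalPeriod κ ε = n) :
    ε * orbitSum κ ζ n ε = ε := by
  rw [orbitSum, Finset.mul_sum, Finset.sum_eq_single 0]
  · simp [hε.isIdempotentElem.eq]
  · intro i hi hi0
    rw [mul_smul_comm, hε.mul_eq_zero_of_ne (hε.map _), smul_zero]
    rw [AlgEquiv.coe_pow]
    exact fun h ↦ not_isPeriodicPt_of_pos_of_lt_minimalPeriod hi0 (hper ▸ mem_range.mp hi) h.symm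
  · simp [Nat.pos_of_ne_zero hn]

theorem exists_eq_smul_pow_of_apply_eq_smul {κ : A ≃ₐ[k] A} {ζ : k} {n : ℕ} (hn : n ≠ 0)
    (hζ : ζ ^ n = 1) (hfix : ∀ a, κ a = a → ∃ t : k, a = t • 1) {u : A} (hu : κ u = ζ • u)
    {β : k} (hβ : β ≠ 0) (hun : u ^ n = β • 1) {m : ℕ} {w : A} (hw : κ w = ζ ^ m • w) :
    ∃ t : k, w = t • u ^ m := by
  obtain ⟨n, rfl⟩ := Nat.exists_eq_succ_of_ne_zero hn
  obtain ⟨t, ht⟩ := hfix (w * u ^ (n * m)) <| by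
    rw [map_mul, map_pow, hw, hu, smul_pow, smul_mul_smul_comm, ← pow_add,
      show m + n * m = (n + 1) * m by ring, pow_mul, hζ, one_pow, one_smul]
  refine ⟨(β ^ m)⁻¹ * t, ?_⟩
  have : β ^ m • w = t • u ^ m :=
    calc β ^ m • w = w * u ^ (n * m) * u ^ m := by
          rw [mul_assoc, ← pow_add, show n * m + m = (n + 1) * m by ring, pow_mul, hun, smul_pow,
            one_pow, mul_smul_comm, mul_one]
      _ = t • u ^ m := by rw [ht, smul_mul_assoc, one_mul]
  rw [mul_smul, ← this, inv_smul_smul₀ (pow_ne_zero m hβ)]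

theorem adjoin_singleton_eq_top_of_apply_eq_smul [FiniteDimensional k A] {κ : A ≃ₐ[k] A}
    {ζ : k} {n : ℕ} (hζ : IsPrimitiveRoot ζ n) (hdim : finrank k A = n) {u : A}
    (hu : κ u = ζ • u) (hunit : IsUnit u) : Algebra.adjoin k {u} = ⊤ := by
  have heig (j : Fin n) :
      Module.End.HasEigenvector (κ.toLinearMap : Module.End k A) (ζ ^ (j : ℕ)) (u ^ (j : ℕ)) := by
    have : Nontrivial A := Module.nontrivial_of_finrank_pos (hdim ▸ j.pos)
    refine ⟨Module.End.mem_eigenspace_iff.mpr ?_, (hunit.pow _).ne_zero⟩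
    simp [map_pow, hu, smul_pow]
  have hli := Module.End.eigenvectors_linearIndependent' κ.toLinearMap _
    (fun i j h ↦ Fin.ext (hζ.pow_inj i.isLt j.isLt h)) _ heig
  rw [← Algebra.toSubmodule_eq_top, eq_top_iff,
    ← hli.span_eq_top_of_card_eq_finrank' (by rw [Fintype.card_fin, hdim]), Submodule.span_le]
  rintro _ ⟨j, rfl⟩
  exact Subalgebra.pow_mem _ (Algebra.self_mem_adjoin_singleton k u) _

theorem exists_generator_of_minimalPeriod_eq [FiniteDimensional k A] [IsReduced A]
    {κ : A ≃ₐ[k] A} {ε : A} (hε : IsMinimalIdempotent k ε) {n : ℕ} (hn : n ≠ 0)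
    (hper : minimalPeriod κ ε = n) (hdim : finrank k A = n) {ζ : k} (hζ : IsPrimitiveRoot ζ n) :
    ∃ (u : A) (β : k), u ≠ 0 ∧ β ≠ 0 ∧ u ^ n = β • 1 ∧ κ u = ζ • u ∧
      Algebra.adjoin k {u} = ⊤ ∧ ∀ (m : ℕ) (w : A), κ w = ζ ^ m • w → ∃ t : k, w = t • u ^ m := by
  have hfix (a : A) : κ a = a → ∃ t : k, a = t • 1 :=
    exists_eq_smul_one_of_apply_eq_self hε (sum_pow_apply_eq_one hε hper hdim)
  set u := orbitSum κ ζ n ε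
  have hκu : κ u = ζ • u := apply_orbitSum hζ.pow_eq_one <| by
    rw [AlgEquiv.coe_pow, ← hper]; exact iterate_minimalPeriod
  have hεu : ε * u = ε := mul_orbitSum hn hε hper
  have hu0 : u ≠ 0 := fun h ↦ hε.ne_zero (by rw [← hεu, h, mul_zero])
  obtain ⟨β, hβ⟩ := hfix (u ^ n) (by rw [map_pow, hκu, smul_pow, hζ.pow_eq_one, one_smul])
  have hβ0 : β ≠ 0 := by
    rintro rfl
    exact hu0 (IsReduced.eq_zero u ⟨n, by rw [hβ, zero_smul]⟩)
  have hunit : IsUnit u := (isUnit_pow_iff hn).mp <| by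
    rw [hβ, ← Algebra.algebraMap_eq_smul_one]; exact (IsUnit.mk0 β hβ0).map _
  exact ⟨u, β, hu0, hβ0, hβ, hκu, adjoin_singleton_eq_top_of_apply_eq_smul hζ hdim hκu hunit,
    fun m w hw ↦ exists_eq_smul_pow_of_apply_eq_smul hn hζ.pow_eq_one hfix hκu hβ0 hβ hw⟩

theorem mul_eq_neg_of_commutator_apply {q γ δ : k} (hq0 : q ≠ 0) (hq4 : q ^ 4 ≠ 1)
    {κ : A ≃ₐ[k] A} {e f : A →ₗ[k] A} (he1 : e 1 = 0)
    (hfab : ∀ a c, f (a * c) = a * f c + f a * κ⁻¹ c)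
    (hef : (q - q⁻¹) • (e ∘ₗ f - f ∘ₗ e) = κ.toLinearMap - (κ⁻¹ : A ≃ₐ[k] A).toLinearMap)
    {u : A} (hu0 : u ≠ 0) (hκu : κ u = q ^ 2 • u) (hfu : f u = γ • 1)
    (heu : e u = δ • u ^ 2) : γ * δ = -q := by
  have hκinv : κ⁻¹ u = q⁻¹ ^ 2 • u := by
    rw [inv_pow, eq_inv_smul_iff₀ (pow_ne_zero 2 hq0), ← map_smul, ← hκu]
    exact κ.symm_apply_apply u
  have h := LinearMap.congr_fun hef u
  simp only [LinearMap.smul_apply, LinearMap.sub_apply, LinearMap.comp_apply,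
    AlgEquiv.toLinearMap_apply] at h
  rw [hfu, map_smul, he1, smul_zero, heu, map_smul, sq, hfab, hfu, hκinv, hκu] at h
  have hscal : ((q - q⁻¹) * -(δ * γ * (1 + q⁻¹ ^ 2))) • u = (q ^ 2 - q⁻¹ ^ 2) • u := by
    rw [sub_smul, ← h]; simp only [mul_smul_comm, smul_mul_assoc, mul_one, one_mul]; module
  have key := smul_left_injective k hu0 hscal
  field_simp at key
  have : (γ * δ + q) * (q ^ 4 - 1) = 0 := by linear_combination -key
  exact eq_neg_of_add_eq_zero_left
    ((mul_eq_zero.mp this).resolve_right (sub_ne_zero.mpr hq4))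

end Commutative

theorem stmt_15 (k : Type*) [Field k] [IsAlgClosed k]
    (n : ℕ) (hn : 3 ≤ n) (hodd : Odd n)
    (q : k) (hq : IsPrimitiveRoot q n)
    (A : Type*) [Ring A] [Algebra k A] [IsReduced A]
    [FiniteDimensional k A] (hdim : Module.finrank k A = n)
    (κ : A ≃ₐ[k] A) (e f : A →ₗ[k] A)
    (hκn : κ ^ n = 1)
    (he1 : e 1 = 0)
    (heab : ∀ a c : A, e (a * c) = κ a * e c + e a * c)
    (hfab : ∀ a c : A, f (a * c) = a * f c + f a * κ⁻¹ c)
    (hκe : κ.toLinearMap ∘ₗ e = q ^ 2 • (e ∘ₗ κ.toLinearMap))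
    (hκf : κ.toLinearMap ∘ₗ f = (q⁻¹) ^ 2 • (f ∘ₗ κ.toLinearMap))
    (hef : (q - q⁻¹) • (e ∘ₗ f - f ∘ₗ e) =
      κ.toLinearMap - (κ⁻¹ : A ≃ₐ[k] A).toLinearMap)
    (hne : f ≠ 0 ∨ e ≠ 0) :
    ∃ (u : A) (β γ δ : k), β ≠ 0 ∧ γ ≠ 0 ∧ δ ≠ 0 ∧
      Algebra.adjoin k {u} = ⊤ ∧ u ^ n = β • (1 : A) ∧
      κ u = q ^ 2 • u ∧ f u = γ • (1 : A) ∧ e u = δ • u ^ 2 ∧ γ * δ = -q ∧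
      (∀ (u' : A) (β' γ' δ' : k), β' ≠ 0 → γ' ≠ 0 → δ' ≠ 0 →
        Algebra.adjoin k {u'} = ⊤ → u' ^ n = β' • (1 : A) →
        κ u' = q ^ 2 • u' → f u' = γ' • (1 : A) → e u' = δ' • u' ^ 2 →
        γ' * δ' = -q → ∃ c : k, u' = c • u) := by
  let _ : CommRing A := { ‹Ring A› with mul_comm := mul_comm_of_isReduced (k := k) }
  have hn0 : n ≠ 0 := by omega
  have hq0 : q ≠ 0 := hq.ne_zero hn0
  have hq2 : IsPrimitiveRoot (q ^ 2) n := hq.pow_of_coprime 2 hodd.coprime_two_left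
  have hq4 : q ^ 4 ≠ 1 := fun h ↦ by
    have := (hodd.coprime_two_right.pow_right 2).eq_one_of_dvd
      ((hq.pow_eq_one_iff_dvd (2 ^ 2)).mp h)
    omega
  have hκe' (a : A) : κ (e a) = q ^ 2 • e (κ a) := by simpa using LinearMap.congr_fun hκe a
  have hκf' (a : A) : κ (f a) = q⁻¹ ^ 2 • f (κ a) := by simpa using LinearMap.congr_fun hκf a
  obtain ⟨ε, hε, hper⟩ :=
    exists_isMinimalIdempotent_minimalPeriod_eq hn0 hq2 hκn heab hfab hκe' hκf' hne
  obtain ⟨u, β, hu0, hβ0, hβ, hκu, hadj, heig⟩ :=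
    exists_generator_of_minimalPeriod_eq hε hn0 hper hdim hq2
  obtain ⟨γ, hγ⟩ : ∃ γ : k, f u = γ • 1 := by
    simpa using heig 0 (f u) <| by
      rw [hκf', hκu, map_smul, smul_smul, ← mul_pow, inv_mul_cancel₀ hq0, one_pow, pow_zero]
  obtain ⟨δ, hδ⟩ := heig 2 (e u) (by rw [hκe', hκu, map_smul, smul_smul, ← sq])
  have hγδ := mul_eq_neg_of_commutator_apply hq0 hq4 he1 hfab hef hu0 hκu hγ hδ
  refine ⟨u, β, γ, δ, hβ0, left_ne_zero_of_mul (hγδ ▸ neg_ne_zero.mpr hq0),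
    right_ne_zero_of_mul (hγδ ▸ neg_ne_zero.mpr hq0), hadj, hβ, hκu, hγ, hδ, hγδ, ?_⟩
  rintro u' - - - - - - - - hκu' - - -
  simpa using heig 1 u' (by rwa [pow_one])
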